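/- arXiv:1612.06247 — 2 statements merged into one kernel-verified Lean document; each statement's English description precedes it below -/
import Mathlib

section
/- Let L = a⁺b⁺ over A = {a,b}. The closure of the set of left quotients of L under finite intersections and finite unions has exactly seven elements: A*, L, a*b⁺, a*b⁺ ∪ {λ}, b*, b⁺, and ∅. -/
def leftQuot {A : Type*} (u : List A) (L : Set (List A)) : Set (List A) :=
  {w | u ++ w ∈ L}

def Lab : Set (List (Fin 2)) :=
  {w | ∃ m n : ℕ, 1 ≤ m ∧ 1 ≤ n ∧ w = List.replicate m 0 ++ List.replicate n 1}

def Kab : Set (List (Fin 2)) :=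
  {w | ∃ m n : ℕ, 1 ≤ n ∧ w = List.replicate m 0 ++ List.replicate n 1}

def bStar : Set (List (Fin 2)) := {w | ∃ n : ℕ, w = List.replicate n 1}

def bPlus : Set (List (Fin 2)) := {w | ∃ n : ℕ, 1 ≤ n ∧ w = List.replicate n 1}

/-!
Every left quotient of `L` is one of `L`, `a*b⁺`, `b*`, `∅`: this family is closed under
`w ↦ x⁻¹w` for each letter `x`. All of these, and `A*`, are unions of the four classes
`a⁺b⁺`, `b⁺`, `{λ}` and the remaining words, so the closure lives in the powerset lattice of a
four-element set, where the seven listed sets visibly form a sublattice. Conversely, `A*` and `∅`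
are the empty intersection and union, and the others are built from `L`, `a⁻¹L = a*b⁺` and
`(ab)⁻¹L = b*` with at most one `∪` or `∩`; the seven are pairwise distinct because every class
is nonempty.
-/

open Set
open List (replicate count count_replicate replicate_succ)

theorem biUnion_biInter_mem_of_isSublattice {α ι : Type*} {𝒯 : Set (Set α)}
    (h𝒯 : IsSublattice 𝒯) (huniv : univ ∈ 𝒯) (hempty : ∅ ∈ 𝒯) {f : ι → Set α}
    (hf : ∀ i, f i ∈ 𝒯) (𝒰 : Finset (Finset ι)) : ⋃ U ∈ 𝒰, ⋂ i ∈ U, f i ∈ 𝒯 := by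
  simp_rw [← Finset.inf_set_eq_iInter, ← Finset.sup_set_eq_biUnion]
  exact Finset.sup_induction hempty (fun _ hs _ ht => h𝒯.supClosed hs ht)
    fun U _ => Finset.inf_induction huniv (fun _ hs _ ht => h𝒯.infClosed hs ht) fun i _ => hf i

section LeftQuot

variable {A : Type*}

theorem leftQuot_nil (L : Set (List A)) : leftQuot [] L = L := rfl

theorem leftQuot_cons (x : A) (u : List A) (L : Set (List A)) :
    leftQuot (x :: u) L = leftQuot u (leftQuot [x] L) := rfl

theorem leftQuot_empty (u : List A) : leftQuot u (∅ : Set (List A)) = ∅ := rfl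

theorem leftQuot_mem_of_forall_leftQuot_singleton_mem {𝒬 : Set (Set (List A))}
    (h𝒬 : ∀ x, ∀ L ∈ 𝒬, leftQuot [x] L ∈ 𝒬) (u : List A) {L : Set (List A)} (hL : L ∈ 𝒬) :
    leftQuot u L ∈ 𝒬 := by
  induction u generalizing L with
  | nil => exact hL
  | cons x u ih => exact ih (h𝒬 x L hL)

end LeftQuot

def blocks (P : ℕ → ℕ → Prop) : Set (List (Fin 2)) :=
  {w | ∃ m n, P m n ∧ w = replicate m 0 ++ replicate n 1}

section Blocks

variable {P Q : ℕ → ℕ → Prop}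

theorem replicate_append_replicate_inj {m n m' n' : ℕ}
    (h : replicate m (0 : Fin 2) ++ replicate n 1 = replicate m' 0 ++ replicate n' 1) :
    m = m' ∧ n = n' :=
  ⟨by simpa [count_replicate] using congrArg (count 0) h,
    by simpa [count_replicate] using congrArg (count 1) h⟩

theorem replicate_append_replicate_mem_blocks {m n : ℕ} :
    replicate m 0 ++ replicate n 1 ∈ blocks P ↔ P m n := by
  refine ⟨fun ⟨m', n', hP, h⟩ => ?_, fun hP => ⟨m, n, hP, rfl⟩⟩
  obtain ⟨rfl, rfl⟩ := replicate_append_replicate_inj h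
  exact hP

theorem nil_mem_blocks : [] ∈ blocks P ↔ P 0 0 :=
  replicate_append_replicate_mem_blocks (m := 0) (n := 0)

theorem zero_cons_eq_replicate_append_replicate {w : List (Fin 2)} {m n : ℕ} :
    0 :: w = replicate m 0 ++ replicate n 1 ↔
      ∃ m', m = m' + 1 ∧ w = replicate m' 0 ++ replicate n 1 := by
  cases m <;> cases n <;> simp [replicate_succ]

theorem one_cons_eq_replicate_append_replicate {w : List (Fin 2)} {m n : ℕ} :
    1 :: w = replicate m 0 ++ replicate n 1 ↔ m = 0 ∧ ∃ n', n = n' + 1 ∧ w = replicate n' 1 := by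
  cases m <;> cases n <;> simp [replicate_succ]

theorem zero_cons_mem_blocks {w : List (Fin 2)} :
    0 :: w ∈ blocks P ↔ w ∈ blocks (fun m n => P (m + 1) n) := by
  simp only [blocks, mem_ofPred_eq, zero_cons_eq_replicate_append_replicate]
  exact ⟨fun ⟨_, n, hP, m', hm, hw⟩ => ⟨m', n, hm ▸ hP, hw⟩,
    fun ⟨m', n, hP, hw⟩ => ⟨_, n, hP, m', rfl, hw⟩⟩

theorem one_cons_mem_blocks {w : List (Fin 2)} :
    1 :: w ∈ blocks P ↔ w ∈ blocks (fun m n => m = 0 ∧ P 0 (n + 1)) := by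
  simp [blocks, one_cons_eq_replicate_append_replicate]

theorem one_zero_notMem_blocks : [1, 0] ∉ blocks P := by
  simp [one_cons_mem_blocks, zero_cons_mem_blocks, nil_mem_blocks]

theorem blocks_congr (h : ∀ m n, P m n ↔ Q m n) : blocks P = blocks Q := by
  simp only [blocks, h]

theorem blocks_eq_empty (h : ∀ m n, ¬P m n) : blocks P = ∅ :=
  eq_empty_of_forall_notMem fun _ ⟨m, n, hP, _⟩ => h m n hP

theorem blocks_inter : blocks P ∩ blocks Q = blocks (fun m n => P m n ∧ Q m n) := by
  ext w
  constructor
  · rintro ⟨⟨m, n, hP, rfl⟩, hQ⟩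
    exact ⟨m, n, ⟨hP, replicate_append_replicate_mem_blocks.1 hQ⟩, rfl⟩
  · rintro ⟨m, n, ⟨hP, hQ⟩, rfl⟩
    exact ⟨⟨m, n, hP, rfl⟩, m, n, hQ, rfl⟩

theorem blocks_union : blocks P ∪ blocks Q = blocks (fun m n => P m n ∨ Q m n) := by
  ext w; simp only [blocks, mem_union, mem_ofPred_eq, or_and_right, exists_or]

end Blocks

theorem Lab_eq_blocks : Lab = blocks (fun m n => 1 ≤ m ∧ 1 ≤ n) := by
  ext w; simp [Lab, blocks, and_assoc]

theorem Kab_eq_blocks : Kab = blocks (fun _ n => 1 ≤ n) := rfl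

theorem bStar_eq_blocks : bStar = blocks (fun m _ => m = 0) := by
  ext w; simp [bStar, blocks]

theorem bPlus_eq_blocks : bPlus = blocks (fun m n => m = 0 ∧ 1 ≤ n) := by
  ext w; simp [bPlus, blocks, and_assoc]

theorem singleton_nil_eq_blocks : {[]} = blocks (fun m n => m = 0 ∧ n = 0) := by
  ext w; simp [blocks]

theorem leftQuot_zero_blocks (P : ℕ → ℕ → Prop) :
    leftQuot [0] (blocks P) = blocks (fun m n => P (m + 1) n) :=
  ext fun _ => zero_cons_mem_blocks

theorem leftQuot_one_blocks (P : ℕ → ℕ → Prop) :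
    leftQuot [1] (blocks P) = blocks (fun m n => m = 0 ∧ P 0 (n + 1)) :=
  ext fun _ => one_cons_mem_blocks

theorem leftQuot_zero_Lab : leftQuot [0] Lab = Kab := by
  rw [Lab_eq_blocks, leftQuot_zero_blocks, Kab_eq_blocks]
  exact blocks_congr fun m n => by omega

theorem leftQuot_one_Lab : leftQuot [1] Lab = ∅ := by
  rw [Lab_eq_blocks, leftQuot_one_blocks]
  exact blocks_eq_empty fun m n => by omega

theorem leftQuot_zero_Kab : leftQuot [0] Kab = Kab := leftQuot_zero_blocks _

theorem leftQuot_one_Kab : leftQuot [1] Kab = bStar := by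
  rw [Kab_eq_blocks, leftQuot_one_blocks, bStar_eq_blocks]
  exact blocks_congr fun m n => by omega

theorem leftQuot_zero_bStar : leftQuot [0] bStar = ∅ := by
  rw [bStar_eq_blocks, leftQuot_zero_blocks]
  exact blocks_eq_empty fun m n => by omega

theorem leftQuot_one_bStar : leftQuot [1] bStar = bStar := by
  rw [bStar_eq_blocks, leftQuot_one_blocks]
  exact blocks_congr fun m n => by omega

theorem leftQuot_Lab_mem (u : List (Fin 2)) :
    leftQuot u Lab ∈ ({Lab, Kab, bStar, ∅} : Set (Set (List (Fin 2)))) := by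
  refine leftQuot_mem_of_forall_leftQuot_singleton_mem (fun x L hL => ?_) u (by simp)
  fin_cases x <;> rcases hL with rfl | rfl | rfl | rfl <;>
    simp [leftQuot_zero_Lab, leftQuot_one_Lab, leftQuot_zero_Kab, leftQuot_one_Kab,
      leftQuot_zero_bStar, leftQuot_one_bStar, leftQuot_empty]

theorem Lab_inter_bPlus : Lab ∩ bPlus = ∅ := by
  rw [Lab_eq_blocks, bPlus_eq_blocks, blocks_inter]
  exact blocks_eq_empty fun m n => by omega

theorem Kab_inter_bStar : Kab ∩ bStar = bPlus := by
  rw [Kab_eq_blocks, bStar_eq_blocks, blocks_inter, bPlus_eq_blocks]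
  exact blocks_congr fun m n => by omega

theorem Kab_union_bStar : Kab ∪ bStar = Kab ∪ {[]} := by
  rw [Kab_eq_blocks, bStar_eq_blocks, singleton_nil_eq_blocks, blocks_union, blocks_union]
  exact blocks_congr fun m n => by omega

theorem nil_notMem_Lab : [] ∉ Lab := by
  simp [Lab_eq_blocks, nil_mem_blocks]

theorem nil_notMem_bPlus : [] ∉ bPlus := by
  simp [bPlus_eq_blocks, nil_mem_blocks]

theorem Lab_union_bPlus : Lab ∪ bPlus = Kab := by
  rw [Lab_eq_blocks, bPlus_eq_blocks, blocks_union, Kab_eq_blocks]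
  exact blocks_congr fun m n => by omega

theorem bPlus_union_nil : bPlus ∪ {[]} = bStar := by
  rw [bPlus_eq_blocks, singleton_nil_eq_blocks, blocks_union, bStar_eq_blocks]
  exact blocks_congr fun m n => by omega

open Classical in
noncomputable def wordClass (w : List (Fin 2)) : Fin 4 :=
  if w ∈ Lab then 0 else if w ∈ bPlus then 1 else if w = [] then 2 else 3

theorem wordClass_eq_zero_iff {w : List (Fin 2)} : wordClass w = 0 ↔ w ∈ Lab := by
  unfold wordClass; split_ifs <;> simp_all

theorem wordClass_eq_one_iff {w : List (Fin 2)} : wordClass w = 1 ↔ w ∈ bPlus := by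
  have : w ∈ Lab → w ∉ bPlus := fun h h' => (Lab_inter_bPlus ▸ ⟨h, h'⟩ : w ∈ (∅ : Set _))
  unfold wordClass; split_ifs <;> simp_all

theorem wordClass_eq_two_iff {w : List (Fin 2)} : wordClass w = 2 ↔ w = [] := by
  have h₀ := nil_notMem_Lab
  have h₁ := nil_notMem_bPlus
  unfold wordClass; split_ifs <;> aesop

theorem wordClass_surjective : Function.Surjective wordClass := by
  intro c
  fin_cases c
  · exact ⟨[0, 1], wordClass_eq_zero_iff.2 ⟨1, 1, le_rfl, le_rfl, rfl⟩⟩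
  · exact ⟨[1], wordClass_eq_one_iff.2 ⟨1, le_rfl, rfl⟩⟩
  · exact ⟨[], wordClass_eq_two_iff.2 rfl⟩
  · refine ⟨[1, 0], ?_⟩
    simp [wordClass, Lab_eq_blocks, bPlus_eq_blocks, one_zero_notMem_blocks]

def ofClasses : LatticeHom (Finset (Fin 4)) (Set (List (Fin 2))) where
  toFun c := wordClass ⁻¹' c
  map_sup' c d := by simp [preimage_union]
  map_inf' c d := by simp [preimage_inter]

theorem mem_ofClasses {w : List (Fin 2)} {c : Finset (Fin 4)} :
    w ∈ ofClasses c ↔ wordClass w ∈ c := Iff.rfl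

theorem ofClasses_injective : Function.Injective ofClasses :=
  (preimage_injective.2 wordClass_surjective).comp Finset.coe_injective

def latticeCodes : List (Finset (Fin 4)) := [Finset.univ, {0}, {0, 1}, {0, 1, 2}, {1, 2}, {1}, ∅]

theorem map_ofClasses_latticeCodes :
    latticeCodes.map ofClasses = [univ, Lab, Kab, Kab ∪ {[]}, bStar, bPlus, ∅] := by
  simp only [latticeCodes, List.map_cons, List.map_nil, List.cons.injEq, and_true]
  refine ⟨?_, ?_, ?_, ?_, ?_, ?_, ?_⟩ <;> ext w <;>
    simp [mem_ofClasses, wordClass_eq_zero_iff, wordClass_eq_one_iff, wordClass_eq_two_iff,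
      ← Lab_union_bPlus, ← bPlus_union_nil] <;> tauto

theorem isSublattice_latticeCodes : IsSublattice {c | c ∈ latticeCodes} := by
  refine ⟨?_, ?_⟩ <;> simp only [SupClosed, InfClosed, mem_ofPred_eq] <;> decide

theorem pairwise_ne_latticeCodes : latticeCodes.Pairwise (· ≠ ·) := by decide

def latticeSets : Set (Set (List (Fin 2))) := {univ, Lab, Kab, Kab ∪ {[]}, bStar, bPlus, ∅}

theorem isSublattice_latticeSets : IsSublattice latticeSets := by
  have h : latticeSets = {S | S ∈ latticeCodes.map ofClasses} := by
    rw [map_ofClasses_latticeCodes]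
    ext
    simp [latticeSets]
  rw [h]
  simp_rw [List.mem_map]
  exact isSublattice_latticeCodes.image ofClasses

theorem latticeSets_subset_closure :
    latticeSets ⊆
      {S | ∃ 𝒰 : Finset (Finset (List (Fin 2))), S = ⋃ U ∈ 𝒰, ⋂ u ∈ U, leftQuot u Lab} := by
  have hKab : leftQuot [0] Lab = Kab := leftQuot_zero_Lab
  have hbStar : leftQuot [0, 1] Lab = bStar := by
    rw [leftQuot_cons, leftQuot_zero_Lab, leftQuot_one_Kab]
  rintro S (rfl | rfl | rfl | rfl | rfl | rfl | rfl)
  · exact ⟨{∅}, by simp⟩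
  · exact ⟨{{[]}}, by simp [leftQuot_nil]⟩
  · exact ⟨{{[0]}}, by simp [hKab]⟩
  · exact ⟨{{[0]}, {[0, 1]}}, by simp [hKab, hbStar, Kab_union_bStar]⟩
  · exact ⟨{{[0, 1]}}, by simp [hbStar]⟩
  · exact ⟨{{[0], [0, 1]}}, by simp [hKab, hbStar, Kab_inter_bStar]⟩
  · exact ⟨∅, by simp⟩

theorem lattice_closure_of_quotients :
    {S : Set (List (Fin 2)) | ∃ 𝒰 : Finset (Finset (List (Fin 2))),
        S = ⋃ U ∈ 𝒰, ⋂ u ∈ U, leftQuot u Lab} =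
      {Set.univ, Lab, Kab, Kab ∪ {[]}, bStar, bPlus, ∅} ∧
    [Set.univ, Lab, Kab, Kab ∪ {[]}, bStar, bPlus,
      (∅ : Set (List (Fin 2)))].Pairwise (· ≠ ·) := by
  refine ⟨subset_antisymm ?_ latticeSets_subset_closure, ?_⟩
  · rintro S ⟨𝒰, rfl⟩
    refine biUnion_biInter_mem_of_isSublattice isSublattice_latticeSets
      (by simp [latticeSets]) (by simp [latticeSets]) (fun u => ?_) 𝒰
    rcases leftQuot_Lab_mem u with h | h | h | h <;> simp [latticeSets, h]
  · rw [← map_ofClasses_latticeCodes, List.pairwise_map]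
    exact pairwise_ne_latticeCodes.imp ofClasses_injective.ne
end

section
/- Suppose the canonical automaton of a regular language L satisfies the Ambainis–Freivalds condition: for all words x, y and states f, g of the minimal automaton (states being left quotients of L), if f ≠ g, f∘x = g and g∘x = g, then g∘y = g for all y. Then for all words p, u, v, w and every state K (a left quotient s⁻¹L), we have K∘(p^ω u) ∪ (K∘(p^ω v) ∩ K∘w) = K∘(p^ω u) ∪ (K∘(p^ω w) ∩ K∘v), where p^ω denotes an idempotent power of p on the (finite) state set, i.e., a power p^m such that acting twice by p^m equals acting once. -/
def wpow {A : Type*} (p : List A) (m : ℕ) : List A := (List.replicate m p).flatten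

section

variable {A : Type*}

def AmbainisFreivalds (L : Set (List A)) : Prop :=
  ∀ (x y s t : List A),
    leftQuot s L ≠ leftQuot t L →
    leftQuot x (leftQuot s L) = leftQuot t L →
    leftQuot x (leftQuot t L) = leftQuot t L →
    leftQuot y (leftQuot t L) = leftQuot t L

theorem leftQuot_leftQuot (x s : List A) (L : Set (List A)) :
    leftQuot x (leftQuot s L) = leftQuot (s ++ x) L := by
  ext w
  simp [leftQuot, List.append_assoc]

theorem leftQuot_append (x y : List A) (K : Set (List A)) :
    leftQuot (x ++ y) K = leftQuot y (leftQuot x K) := by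
  ext w
  simp [leftQuot, List.append_assoc]

theorem AmbainisFreivalds.leftQuot_eq_self_of_idempotent {L : Set (List A)}
    (hL : AmbainisFreivalds L) {x s : List A}
    (hne : leftQuot x (leftQuot s L) ≠ leftQuot s L)
    (hidem : leftQuot x (leftQuot x (leftQuot s L)) = leftQuot x (leftQuot s L)) (y : List A) :
    leftQuot y (leftQuot x (leftQuot s L)) = leftQuot x (leftQuot s L) := by
  rw [leftQuot_leftQuot x s L] at hne hidem ⊢
  exact hL x y s (s ++ x) (Ne.symm hne) (leftQuot_leftQuot x s L) hidem

end

theorem AF_implies_lattice_identity_general {A : Type*} (L : Set (List A))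
    (AF : ∀ (x y s t : List A),
      leftQuot s L ≠ leftQuot t L →
      leftQuot x (leftQuot s L) = leftQuot t L →
      leftQuot x (leftQuot t L) = leftQuot t L →
      leftQuot y (leftQuot t L) = leftQuot t L)
    (p u v w : List A) (m : ℕ)
    (hidem : ∀ s : List A,
      leftQuot (wpow p m) (leftQuot (wpow p m) (leftQuot s L)) =
        leftQuot (wpow p m) (leftQuot s L))
    (s : List A) :
    leftQuot (wpow p m ++ u) (leftQuot s L) ∪
      (leftQuot (wpow p m ++ v) (leftQuot s L) ∩ leftQuot w (leftQuot s L)) =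
    leftQuot (wpow p m ++ u) (leftQuot s L) ∪
      (leftQuot (wpow p m ++ w) (leftQuot s L) ∩ leftQuot v (leftQuot s L)) := by
  simp only [leftQuot_append (wpow p m)]
  by_cases hfix : leftQuot (wpow p m) (leftQuot s L) = leftQuot s L
  · rw [hfix, Set.inter_comm]
  · have absorbing := AmbainisFreivalds.leftQuot_eq_self_of_idempotent AF hfix (hidem s)
    rw [absorbing u, absorbing v, absorbing w,
      Set.union_eq_self_of_subset_right Set.inter_subset_left,
      Set.union_eq_self_of_subset_right Set.inter_subset_left]

theorem AF_implies_lattice_identity {A : Type*} (L : Set (List A))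
    (AF : ∀ (x y s t : List A),
      leftQuot s L ≠ leftQuot t L →
      leftQuot x (leftQuot s L) = leftQuot t L →
      leftQuot x (leftQuot t L) = leftQuot t L →
      leftQuot y (leftQuot t L) = leftQuot t L)
    (p u v w : List A) (m : ℕ) (hm : 1 ≤ m)
    (hidem : ∀ s : List A,
      leftQuot (wpow p m) (leftQuot (wpow p m) (leftQuot s L)) =
        leftQuot (wpow p m) (leftQuot s L))
    (s : List A) :
    leftQuot (wpow p m ++ u) (leftQuot s L) ∪
      (leftQuot (wpow p m ++ v) (leftQuot s L) ∩ leftQuot w (leftQuot s L)) =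
    leftQuot (wpow p m ++ u) (leftQuot s L) ∪
      (leftQuot (wpow p m ++ w) (leftQuot s L) ∩ leftQuot v (leftQuot s L)) :=
  AF_implies_lattice_identity_general L AF p u v w m hidem s
end
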